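/- For all n ≥ 0, Q_{n+1}(x) = Σ_{k=0}^{n} C(n,k)·P_k(x)·Q_{n-k}(x). -/
import Mathlib


open Polynomial Finset

noncomputable def tanDerivPoly : ℕ → Polynomial ℝ
  | 0 => X
  | n + 1 => (1 + X ^ 2) * derivative (tanDerivPoly n)

noncomputable def secDerivPoly : ℕ → Polynomial ℝ
  | 0 => 1
  | n + 1 => (1 + X ^ 2) * derivative (secDerivPoly n) + X * secDerivPoly n

theorem secDerivPoly_convolution (n : ℕ) :
    secDerivPoly (n + 1) =
      ∑ k ∈ Finset.range (n + 1),
        (n.choose k : Polynomial ℝ) * tanDerivPoly k * secDerivPoly (n - k) := by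
  induction n with
  | zero => simp [secDerivPoly, tanDerivPoly]
  | succ n ih =>
    have key : secDerivPoly (n + 2) =
        (∑ k ∈ range (n + 1), (n.choose k : Polynomial ℝ) * tanDerivPoly (k + 1) * secDerivPoly (n - k))
      + (∑ k ∈ range (n + 1), (n.choose k : Polynomial ℝ) * tanDerivPoly k * secDerivPoly (n - k + 1)) := by
      show (1 + X ^ 2) * derivative (secDerivPoly (n + 1)) + X * secDerivPoly (n + 1) = _
      rw [ih, derivative_sum, Finset.mul_sum, Finset.mul_sum, ← Finset.sum_add_distrib,
        ← Finset.sum_add_distrib]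
      refine Finset.sum_congr rfl fun k hk => ?_
      have h1 : tanDerivPoly (k + 1) = (1 + X ^ 2) * derivative (tanDerivPoly k) := rfl
      have h2 : secDerivPoly (n - k + 1)
          = (1 + X ^ 2) * derivative (secDerivPoly (n - k)) + X * secDerivPoly (n - k) := rfl
      rw [h1, h2, derivative_mul, derivative_mul, derivative_natCast]
      ring
    rw [key]
    have hB : (∑ k ∈ range (n + 1),
          (n.choose k : Polynomial ℝ) * tanDerivPoly k * secDerivPoly (n - k + 1))
        = (∑ k ∈ range n,
            (n.choose (k + 1) : Polynomial ℝ) * tanDerivPoly (k + 1) * secDerivPoly (n - k))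
          + tanDerivPoly 0 * secDerivPoly (n + 1) := by
      rw [Finset.sum_range_succ']
      simp only [Nat.choose_zero_right, Nat.cast_one, one_mul, Nat.sub_zero]
      congr 1
      refine Finset.sum_congr rfl fun k hk => ?_
      have : n - (k + 1) + 1 = n - k := by
        have := Finset.mem_range.mp hk; omega
      rw [this]
    rw [hB]
    conv_rhs => rw [Finset.sum_range_succ']
    simp only [Nat.choose_zero_right, Nat.cast_one, one_mul, Nat.sub_zero,
      Nat.succ_sub_succ_eq_sub, Nat.choose_succ_succ, Nat.cast_add, add_mul]
    rw [Finset.sum_add_distrib]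
    have hC : (∑ k ∈ range (n + 1),
          (n.choose (k + 1) : Polynomial ℝ) * tanDerivPoly (k + 1) * secDerivPoly (n - k))
        = ∑ k ∈ range n,
            (n.choose (k + 1) : Polynomial ℝ) * tanDerivPoly (k + 1) * secDerivPoly (n - k) := by
      rw [Finset.sum_range_succ, Nat.choose_succ_self]
      simp
    rw [hC]
    ring
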